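/- arXiv:2010.15359 — 2 statements merged into one kernel-verified Lean document; each statement's English description precedes it below -/
import Mathlib

section
/- For every g ≥ 1, the integral symplectic group Sp(2g,ℤ) acts transitively on the primitive vectors of ℤ^{2g}: for any two primitive vectors v, w ∈ ℤ^{2g} there exists a matrix M ∈ Sp(2g,ℤ) with M·v = w. -/
open scoped BigOperators

/-- The standard symplectic form
`ω(x,y) = Σ_{i=0}^{g-1} (x_{2i}·y_{2i+1} − x_{2i+1}·y_{2i})` on `R^{2g}`. -/
def stdSymp {R : Type*} [CommRing R] (g : ℕ) (x y : Fin (2 * g) → R) : R :=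
  ∑ i : Fin g,
    (x ⟨2 * i.val, by have := i.isLt; omega⟩ * y ⟨2 * i.val + 1, by have := i.isLt; omega⟩
      - x ⟨2 * i.val + 1, by have := i.isLt; omega⟩ * y ⟨2 * i.val, by have := i.isLt; omega⟩)

/-!
Symplectic transvections `x ↦ x + c·ω(x,u)·u` lie in `Sp(2g,ℤ)`. Along basis vectors they act on
a coordinate pair `(x_{2i}, x_{2i+1})` by elementary shears, and a product of two of them adds a
multiple of `x_{2j}` to `x_{2i}` once `x_{2i+1} = 0`. Running the Euclidean algorithm with these
shears first clears every odd coordinate and then sweeps all even coordinates into `x_0`, so every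
vector is equivalent to some `d·e_0`. For a primitive vector `d = ±1`, since the action preserves
primitivity, and `-1 ∈ Sp(2g,ℤ)` takes care of the sign.
-/

open Function Matrix

theorem LinearMap.BilinForm.IsAlt.apply_add_smul_apply_add_smul {R M : Type*} [CommRing R]
    [AddCommGroup M] [Module R M] {B : LinearMap.BilinForm R M} (hB : B.IsAlt) (u : M) (c : R)
    (x y : M) : B (x + (c * B x u) • u) (y + (c * B y u) • u) = B x y := by
  simp only [map_add, map_smul, LinearMap.add_apply, LinearMap.smul_apply, hB.self_eq_zero,
    smul_eq_mul, ← LinearMap.IsAlt.neg hB y u]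
  ring

theorem Int.exists_rel_zero_of_shears {r : ℤ × ℤ → ℤ × ℤ → Prop} (refl : ∀ p, r p p)
    (trans : ∀ {p q s}, r p q → r q s → r p s)
    (shear₁ : ∀ a b c : ℤ, r (a, b) (a + c * b, b)) (shear₂ : ∀ a b c : ℤ, r (a, b) (a, b + c * a))
    (a b : ℤ) : ∃ d, r (a, b) (d, 0) := by
  induction hn : b.natAbs using Nat.strong_induction_on generalizing a b with
  | _ n ih =>
  rcases eq_or_ne b 0 with rfl | hb
  · exact ⟨a, refl _⟩
  -- with `ρ = a % b`: `(a, b) → (ρ + b, b) → (ρ + b, -ρ) → (b, -ρ)`, and `|ρ| < |b|`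
  set ρ := a % b with hρ_def
  have h₁ : r (a, b) (ρ + b, b) := by
    convert shear₁ a b (1 - a / b) using 2
    rw [hρ_def, Int.emod_def]; ring
  have h₂ : r (ρ + b, b) (ρ + b, -ρ) := by
    convert shear₂ (ρ + b) b (-1) using 2; ring
  have h₃ : r (ρ + b, -ρ) (b, -ρ) := by
    convert shear₁ (ρ + b) (-ρ) 1 using 2; ring
  have hρ : (-ρ).natAbs < n := by
    have := Int.abs_eq_natAbs b ▸ Int.emod_lt_abs a hb
    have := Int.emod_nonneg a hb
    omega
  obtain ⟨d, hd⟩ := ih _ hρ b (-ρ) rfl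
  exact ⟨d, trans h₁ (trans h₂ (trans h₃ hd))⟩

def IsPrimitive {R ι : Type*} [CommRing R] (v : ι → R) : Prop :=
  ∀ d : R, (∀ i, d ∣ v i) → IsUnit d

section Primitive

variable {R : Type*} [CommRing R]

theorem IsPrimitive.of_mulVec {n : Type*} [Fintype n] {A : Matrix n n R} {v : n → R}
    (h : IsPrimitive (A *ᵥ v)) : IsPrimitive v :=
  fun d hd => h d fun _ => Finset.dvd_sum fun j _ => (hd j).mul_left _

theorem IsPrimitive.isUnit_of_single {n : Type*} [DecidableEq n] {k : n} {d : R}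
    (h : IsPrimitive (Pi.single k d)) : IsUnit d :=
  h d fun i => by by_cases hi : i = k <;> simp [hi]

end Primitive

section Indices

variable {g : ℕ}

def evenIdx (i : Fin g) : Fin (2 * g) := ⟨2 * i, by omega⟩

def oddIdx (i : Fin g) : Fin (2 * g) := ⟨2 * i + 1, by omega⟩

@[simp] lemma evenIdx_inj {i j : Fin g} : evenIdx i = evenIdx j ↔ i = j := by
  simp [evenIdx, Fin.ext_iff]

@[simp] lemma oddIdx_inj {i j : Fin g} : oddIdx i = oddIdx j ↔ i = j := by
  simp [oddIdx, Fin.ext_iff]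

@[simp] lemma evenIdx_ne_oddIdx (i j : Fin g) : evenIdx i ≠ oddIdx j := by
  simp only [evenIdx, oddIdx, ne_eq, Fin.ext_iff]
  omega

@[simp] lemma oddIdx_ne_evenIdx (i j : Fin g) : oddIdx i ≠ evenIdx j :=
  (evenIdx_ne_oddIdx j i).symm

lemma exists_eq_evenIdx_or_eq_oddIdx (k : Fin (2 * g)) : ∃ i, k = evenIdx i ∨ k = oddIdx i := by
  refine ⟨⟨k / 2, by omega⟩, ?_⟩
  simp only [evenIdx, oddIdx, Fin.ext_iff]
  omega

end Indices

section Form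

variable {R : Type*} [CommRing R] {g : ℕ}

lemma stdSymp_eq (x y : Fin (2 * g) → R) :
    stdSymp g x y = ∑ i, (x (evenIdx i) * y (oddIdx i) - x (oddIdx i) * y (evenIdx i)) :=
  rfl

variable (R g) in
def stdSympForm : LinearMap.BilinForm R (Fin (2 * g) → R) :=
  LinearMap.mk₂ R (stdSymp g)
    (fun x x' y => by
      simp only [stdSymp_eq, Pi.add_apply, ← Finset.sum_add_distrib]
      exact Finset.sum_congr rfl fun _ _ => by ring)
    (fun c x y => by
      simp only [stdSymp_eq, Pi.smul_apply, smul_eq_mul, Finset.mul_sum]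
      exact Finset.sum_congr rfl fun _ _ => by ring)
    (fun x y y' => by
      simp only [stdSymp_eq, Pi.add_apply, ← Finset.sum_add_distrib]
      exact Finset.sum_congr rfl fun _ _ => by ring)
    (fun c x y => by
      simp only [stdSymp_eq, Pi.smul_apply, smul_eq_mul, Finset.mul_sum]
      exact Finset.sum_congr rfl fun _ _ => by ring)

@[simp] lemma stdSympForm_apply (x y : Fin (2 * g) → R) : stdSympForm R g x y = stdSymp g x y :=
  rfl

lemma stdSympForm_isAlt : (stdSympForm R g).IsAlt := fun x => by
  simp [stdSymp_eq, mul_comm]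

lemma stdSymp_single_evenIdx (x : Fin (2 * g) → R) (i : Fin g) :
    stdSymp g x (Pi.single (evenIdx i) 1) = -x (oddIdx i) := by
  simp [stdSymp_eq, Pi.single_apply]

lemma stdSymp_single_oddIdx (x : Fin (2 * g) → R) (i : Fin g) :
    stdSymp g x (Pi.single (oddIdx i) 1) = x (evenIdx i) := by
  simp [stdSymp_eq, Pi.single_apply]

end Form

section Orbit

variable {R : Type*} [CommRing R] {g : ℕ}

def SpRel (g : ℕ) (v w : Fin (2 * g) → R) : Prop :=
  ∃ M : Matrix (Fin (2 * g)) (Fin (2 * g)) R,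
    IsUnit M.det ∧ (∀ x y, stdSymp g (M *ᵥ x) (M *ᵥ y) = stdSymp g x y) ∧ M *ᵥ v = w

namespace SpRel

theorem refl (v : Fin (2 * g) → R) : SpRel g v v :=
  ⟨1, by simp, by simp, by simp⟩

theorem trans {u v w : Fin (2 * g) → R} (h₁ : SpRel g u v) (h₂ : SpRel g v w) : SpRel g u w := by
  obtain ⟨M, hM, hMω, rfl⟩ := h₁
  obtain ⟨N, hN, hNω, rfl⟩ := h₂
  exact ⟨N * M, by simpa [det_mul] using hN.mul hM,
    fun x y => by simp only [← mulVec_mulVec, hNω, hMω], by rw [mulVec_mulVec]⟩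

theorem symm {v w : Fin (2 * g) → R} (h : SpRel g v w) : SpRel g w v := by
  obtain ⟨M, hM, hMω, rfl⟩ := h
  refine ⟨M⁻¹, isUnit_nonsing_inv_det M hM, fun x y => ?_, by
    rw [mulVec_mulVec, nonsing_inv_mul M hM, one_mulVec]⟩
  rw [← hMω, mulVec_mulVec, mulVec_mulVec, mul_nonsing_inv M hM, one_mulVec, one_mulVec]

theorem of_linearEquiv (e : (Fin (2 * g) → R) ≃ₗ[R] (Fin (2 * g) → R))
    (he : ∀ x y, stdSymp g (e x) (e y) = stdSymp g x y) (v : Fin (2 * g) → R) :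
    SpRel g v (e v) :=
  ⟨LinearMap.toMatrix' e, by rw [LinearMap.det_toMatrix']; exact e.isUnit_det',
    by simpa [LinearMap.toMatrix'_mulVec] using he, LinearMap.toMatrix'_mulVec _ _⟩

theorem neg (v : Fin (2 * g) → R) : SpRel g v (-v) :=
  of_linearEquiv (LinearEquiv.neg R) (fun x y => by simp [← stdSympForm_apply]) v

theorem add_smul (x u : Fin (2 * g) → R) (c : R) : SpRel g x (x + (c * stdSymp g x u) • u) := by
  have hu : (c • (stdSympForm R g).flip u) u = 0 := by simp [stdSympForm_isAlt.self_eq_zero]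
  exact of_linearEquiv (LinearEquiv.transvection hu)
    (fun x y => stdSympForm_isAlt.apply_add_smul_apply_add_smul u c x y) x

theorem add_single_evenIdx (x : Fin (2 * g) → R) (i : Fin g) (c : R) :
    SpRel g x (x + Pi.single (evenIdx i) (c * x (oddIdx i))) := by
  simpa [stdSymp_single_evenIdx, ← Pi.single_smul'] using add_smul x (Pi.single (evenIdx i) 1) (-c)

theorem add_single_oddIdx (x : Fin (2 * g) → R) (i : Fin g) (c : R) :
    SpRel g x (x + Pi.single (oddIdx i) (c * x (evenIdx i))) := by
  simpa [stdSymp_single_oddIdx, ← Pi.single_smul'] using add_smul x (Pi.single (oddIdx i) 1) c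

theorem add_single_evenIdx_of_ne {i j : Fin g} (hij : i ≠ j) {x : Fin (2 * g) → R}
    (hx : x (oddIdx i) = 0) (c : R) :
    SpRel g x (x + Pi.single (evenIdx i) (c * x (evenIdx j))) := by
  set u : Fin (2 * g) → R := Pi.single (evenIdx i) 1 + Pi.single (oddIdx j) 1
  have hxu : stdSymp g x u = x (evenIdx j) := by
    simpa [hx, stdSymp_single_evenIdx, stdSymp_single_oddIdx] using
      (stdSympForm R g x).map_add (Pi.single (evenIdx i) 1) (Pi.single (oddIdx j) 1)
  -- the transvection along `u` also adds `c * x (evenIdx j)` at `oddIdx j`; a second one removes it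
  convert (add_smul x u c).trans (add_single_oddIdx _ j (-c)) using 1
  ext k
  by_cases hki : k = evenIdx i <;> by_cases hkj : k = oddIdx j <;>
    simp [hki, hkj, hxu, u, Ne.symm hij]

end SpRel

theorem IsPrimitive.of_spRel {v w : Fin (2 * g) → R} (hv : IsPrimitive v) (h : SpRel g v w) :
    IsPrimitive w := by
  obtain ⟨N, -, -, rfl⟩ := h.symm
  exact hv.of_mulVec

end Orbit

section Reduction

variable {g : ℕ}

theorem exists_spRel_update_update_zero {k l : Fin (2 * g)} (hkl : k ≠ l) (x : Fin (2 * g) → ℤ)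
    (shear₁ : ∀ y : Fin (2 * g) → ℤ, (∀ m, m ≠ k → m ≠ l → y m = x m) →
      ∀ c, SpRel g y (y + Pi.single k (c * y l)))
    (shear₂ : ∀ y : Fin (2 * g) → ℤ, (∀ m, m ≠ k → m ≠ l → y m = x m) →
      ∀ c, SpRel g y (y + Pi.single l (c * y k))) :
    ∃ d, SpRel g x (update (update x k d) l 0) := by
  let emb (p : ℤ × ℤ) : Fin (2 * g) → ℤ := update (update x k p.1) l p.2
  have emb_eq (p : ℤ × ℤ) : ∀ m, m ≠ k → m ≠ l → emb p m = x m := by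
    intro m hmk hml; simp [emb, hmk, hml]
  obtain ⟨d, hd⟩ := Int.exists_rel_zero_of_shears (r := fun p q => SpRel g (emb p) (emb q))
    (fun _ => SpRel.refl _) SpRel.trans
    (fun a b c => by
      convert shear₁ (emb (a, b)) (emb_eq _) c using 1
      ext m; by_cases hmk : m = k <;> by_cases hml : m = l <;> simp [emb, hmk, hml, hkl])
    (fun a b c => by
      convert shear₂ (emb (a, b)) (emb_eq _) c using 1
      ext m; by_cases hmk : m = k <;> by_cases hml : m = l <;> simp [emb, hmk, hml, hkl])
    (x k) (x l)
  exact ⟨d, by simpa [emb] using hd⟩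

theorem exists_spRel_pair_reduced (x : Fin (2 * g) → ℤ) (i : Fin g) :
    ∃ d, SpRel g x (update (update x (evenIdx i) d) (oddIdx i) 0) :=
  exists_spRel_update_update_zero (by simp) x (fun y _ c => SpRel.add_single_evenIdx y i c)
    (fun y _ c => SpRel.add_single_oddIdx y i c)

theorem exists_spRel_cross_reduced {i j : Fin g} (hij : i ≠ j) (x : Fin (2 * g) → ℤ)
    (hi : x (oddIdx i) = 0) (hj : x (oddIdx j) = 0) :
    ∃ d, SpRel g x (update (update x (evenIdx i) d) (evenIdx j) 0) :=
  exists_spRel_update_update_zero (by simpa) x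
    (fun y hy c => SpRel.add_single_evenIdx_of_ne hij (by rw [hy _ (by simp) (by simp), hi]) c)
    (fun y hy c => SpRel.add_single_evenIdx_of_ne hij.symm (by rw [hy _ (by simp) (by simp), hj]) c)

theorem exists_spRel_single (i₀ : Fin g) (x : Fin (2 * g) → ℤ) :
    ∃ d, SpRel g x (Pi.single (evenIdx i₀) d) := by
  suffices ∀ s : Finset (Fin g), ∃ w, SpRel g x w ∧ w (oddIdx i₀) = 0 ∧
      ∀ i ∈ s, i ≠ i₀ → w (evenIdx i) = 0 ∧ w (oddIdx i) = 0 by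
    obtain ⟨w, hxw, hw₀, hw⟩ := this Finset.univ
    refine ⟨w (evenIdx i₀), ?_⟩
    convert hxw using 1
    ext k
    obtain ⟨i, rfl | rfl⟩ := exists_eq_evenIdx_or_eq_oddIdx k <;> by_cases hi : i = i₀ <;>
      simp [hi, hw₀, hw i (Finset.mem_univ i)]
  intro s
  induction s using Finset.induction_on with
  | empty =>
    obtain ⟨d, h⟩ := exists_spRel_pair_reduced x i₀
    exact ⟨_, h, by simp, by simp⟩
  | insert i s hi ih =>
    obtain ⟨w, hxw, hw₀, hw⟩ := ih
    by_cases hii₀ : i = i₀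
    · exact ⟨w, hxw, hw₀, by simpa [hii₀] using hw⟩
    obtain ⟨a, h₁⟩ := exists_spRel_pair_reduced w i
    obtain ⟨b, h₂⟩ := exists_spRel_cross_reduced (Ne.symm hii₀)
      (update (update w (evenIdx i) a) (oddIdx i) 0) (by simp [hw₀, Ne.symm hii₀]) (by simp)
    refine ⟨_, hxw.trans (h₁.trans h₂), by simp [hw₀, Ne.symm hii₀], ?_⟩
    intro j hj hj₀
    rcases Finset.mem_insert.1 hj with rfl | hj
    · simp
    · have hji : j ≠ i := fun h => hi (h ▸ hj)
      simp [hji, hj₀, hw j hj hj₀]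

theorem spRel_single_one {v : Fin (2 * g) → ℤ} (hv : IsPrimitive v) (i₀ : Fin g) :
    SpRel g v (Pi.single (evenIdx i₀) 1) := by
  obtain ⟨d, h⟩ := exists_spRel_single i₀ v
  rcases Int.isUnit_iff.1 (hv.of_spRel h).isUnit_of_single with rfl | rfl
  · exact h
  · simpa [← Pi.single_neg] using h.trans (SpRel.neg _)

end Reduction

/-- **Transitivity of `Sp(2g,ℤ)` on primitive vectors.**
For every `g ≥ 1` and any two primitive vectors `v, w ∈ ℤ^{2g}` there is an
integral symplectic matrix `M` (invertible over `ℤ` and preserving the standard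
symplectic form) with `M·v = w`. -/
theorem sp_transitive_on_primitive_vectors
    (g : ℕ) (hg : 1 ≤ g) (v w : Fin (2 * g) → ℤ)
    (hv : ∀ d : ℤ, (∀ i, d ∣ v i) → IsUnit d)
    (hw : ∀ d : ℤ, (∀ i, d ∣ w i) → IsUnit d) :
    ∃ M : Matrix (Fin (2 * g)) (Fin (2 * g)) ℤ,
      IsUnit M.det ∧
      (∀ x y : Fin (2 * g) → ℤ, stdSymp g (M.mulVec x) (M.mulVec y) = stdSymp g x y) ∧
      M.mulVec v = w :=
  (spRel_single_one hv ⟨0, hg⟩).trans (spRel_single_one hw ⟨0, hg⟩).symm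
end

section
/- Let A and B be two skew-symmetric 4×4 integer matrices (Gram matrices of integral alternating bilinear forms on ℤ⁴) such that: the gcd of the entries of A is 1 and the gcd of the entries of B is 1 (the forms are indivisible), and Pf(A) = Pf(B) > 0, where Pf(M) = M₀₁·M₂₃ − M₀₂·M₁₃ + M₀₃·M₁₂ denotes the Pfaffian. Then there exists a matrix P ∈ GL(4,ℤ) with Pᵀ·A·P = B. In other words, two rank-four integral symplectic lattices with indivisible forms and equal determinants are isomorphic. -/
/-!
Every indivisible alternating form on `ℤ⁴` has a basis in which its Gram matrix is
`skew4 1 0 0 0 0 m` with `m ≥ 0`. To find it, move a nonzero entry to position `(0, 1)`.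
While this pivot is not a unit, the Euclidean algorithm against an entry of rows `0`, `1`
that it does not divide yields a congruent matrix with a smaller nonzero pivot. If it divides
all these entries, clear them; by indivisibility it then fails to divide the entry at `(2, 3)`,
which a further change of basis moves into row `0`. A unit pivot clears its rows and columns.
Congruence over `ℤ` preserves the determinant `Pf²`, so `m = |Pf|` is the only invariant.
-/

open Matrix

/-- The Pfaffian of a skew-symmetric `4 × 4` matrix:
`Pf(A) = A₀₁·A₂₃ − A₀₂·A₁₃ + A₀₃·A₁₂`. -/
def pfaffian4 (A : Matrix (Fin 4) (Fin 4) ℤ) : ℤ :=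
  A 0 1 * A 2 3 - A 0 2 * A 1 3 + A 0 3 * A 1 2

namespace Matrix

def IsIndivisible {m n R : Type*} [Monoid R] (A : Matrix m n R) : Prop :=
  ∀ d : R, (∀ i j, d ∣ A i j) → IsUnit d

theorem IsIndivisible.exists_apply_ne_zero {m n R : Type*} [MonoidWithZero R] [Nontrivial R]
    {A : Matrix m n R} (h : IsIndivisible A) : ∃ i j, A i j ≠ 0 := by
  by_contra! hA
  exact not_isUnit_zero (h 0 fun i j => by simp [hA i j])

section Congruence

variable {n R : Type*} [Fintype n] [DecidableEq n] [CommRing R]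

def IsCongruent (A B : Matrix n n R) : Prop :=
  ∃ P : Matrix n n R, IsUnit P.det ∧ Pᵀ * A * P = B

namespace IsCongruent

theorem refl (A : Matrix n n R) : IsCongruent A A :=
  ⟨1, by simp, by simp⟩

theorem trans {A B C : Matrix n n R} (hAB : IsCongruent A B) (hBC : IsCongruent B C) :
    IsCongruent A C := by
  obtain ⟨P, hP, rfl⟩ := hAB
  obtain ⟨Q, hQ, rfl⟩ := hBC
  exact ⟨P * Q, by simpa [det_mul] using hP.mul hQ, by simp [transpose_mul, Matrix.mul_assoc]⟩

theorem symm {A B : Matrix n n R} (h : IsCongruent A B) : IsCongruent B A := by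
  obtain ⟨P, hP, rfl⟩ := h
  have hPt : IsUnit Pᵀ.det := by rwa [det_transpose]
  refine ⟨P⁻¹, isUnit_nonsing_inv_det P hP, ?_⟩
  rw [transpose_nonsing_inv, Matrix.mul_assoc, mul_nonsing_inv_cancel_right _ _ hP,
    nonsing_inv_mul_cancel_left _ _ hPt]

theorem submatrix (A : Matrix n n R) (σ : Equiv.Perm n) : IsCongruent A (A.submatrix σ σ) := by
  refine ⟨(σ⁻¹).permMatrix R, ?_, ?_⟩
  · rw [det_permutation]
    exact (Units.isUnit _).map (Int.castRingHom R)
  · rw [transpose_permMatrix, inv_inv, Equiv.Perm.permMatrix, Equiv.Perm.permMatrix,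
      PEquiv.toMatrix_toPEquiv_mul, PEquiv.mul_toMatrix_toPEquiv]
    rfl

theorem transpose_eq_neg {A B : Matrix n n R} (h : IsCongruent A B) (hA : Aᵀ = -A) :
    Bᵀ = -B := by
  obtain ⟨P, -, rfl⟩ := h
  simp [transpose_mul, hA, Matrix.mul_assoc]

theorem dvd_apply {A B : Matrix n n R} (h : IsCongruent A B) {d : R} (hd : ∀ i j, d ∣ A i j)
    (i j : n) : d ∣ B i j := by
  obtain ⟨P, -, rfl⟩ := h
  simp only [mul_apply]
  exact Finset.dvd_sum fun k _ => dvd_mul_of_dvd_left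
    (Finset.dvd_sum fun l _ => dvd_mul_of_dvd_right (hd l k) _) _

theorem isIndivisible {A B : Matrix n n R} (h : IsCongruent A B) (hA : IsIndivisible A) :
    IsIndivisible B :=
  fun d hd => hA d (h.symm.dvd_apply hd)

theorem det_eq {A B : Matrix n n ℤ} (h : IsCongruent A B) : B.det = A.det := by
  obtain ⟨P, hP, rfl⟩ := h
  rw [det_mul, det_mul, det_transpose, mul_right_comm, ← sq, Int.isUnit_sq hP, one_mul]

end IsCongruent

end Congruence

end Matrix

theorem Equiv.Perm.exists_apply_eq_apply_eq {α : Type*} [DecidableEq α] {x y i j : α}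
    (hxy : x ≠ y) (hij : i ≠ j) : ∃ σ : Equiv.Perm α, σ x = i ∧ σ y = j := by
  set k := Equiv.swap x i j
  have hkx : k ≠ x := fun h =>
    hij ((Equiv.swap_apply_eq_iff.1 h).trans (Equiv.swap_apply_left x i)).symm
  refine ⟨Equiv.swap x i * Equiv.swap y k, ?_, ?_⟩
  · simp [Equiv.swap_apply_of_ne_of_ne hxy hkx.symm]
  · simp [k]

section Skew4

variable {R : Type*} [CommRing R]

def skew4 (a b c d e f : R) : Matrix (Fin 4) (Fin 4) R :=
  !![0, a, b, c; -a, 0, d, e; -b, -d, 0, f; -c, -e, -f, 0]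

theorem isCongruent_skew4_swap01 (a b c d e f : R) :
    IsCongruent (skew4 a b c d e f) (skew4 (-a) d e b c f) := by
  convert IsCongruent.submatrix (skew4 a b c d e f) (Equiv.swap 0 1) using 1
  ext i j
  fin_cases i <;> fin_cases j <;> simp [skew4, Equiv.swap_apply_of_ne_of_ne]

theorem isCongruent_skew4_swap12 (a b c d e f : R) :
    IsCongruent (skew4 a b c d e f) (skew4 b a c (-d) f e) := by
  convert IsCongruent.submatrix (skew4 a b c d e f) (Equiv.swap 1 2) using 1
  ext i j
  fin_cases i <;> fin_cases j <;> simp [skew4, Equiv.swap_apply_of_ne_of_ne]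

theorem isCongruent_skew4_swap23 (a b c d e f : R) :
    IsCongruent (skew4 a b c d e f) (skew4 a c b e d (-f)) := by
  convert IsCongruent.submatrix (skew4 a b c d e f) (Equiv.swap 2 3) using 1
  ext i j
  fin_cases i <;> fin_cases j <;> simp [skew4, Equiv.swap_apply_of_ne_of_ne]

-- The basis change `e₂ ↦ e₂ + x e₀ + z e₁`, `e₃ ↦ e₃ + y e₀ + w e₁`.
theorem isCongruent_skew4_shear (a b c d e f x y z w : R) :
    IsCongruent (skew4 a b c d e f) (skew4 a (b + z * a) (c + w * a) (d - x * a) (e - y * a)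
      (f - y * b - w * d + x * c + z * e + (x * w - y * z) * a)) := by
  refine ⟨!![1, 0, x, y; 0, 1, z, w; 0, 0, 1, 0; 0, 0, 0, 1], ?_, ?_⟩
  · simp [det_succ_row_zero, Fin.sum_univ_succ]
  · ext i j
    fin_cases i <;> fin_cases j <;> simp [skew4, mul_apply, Fin.sum_univ_succ] <;> ring

-- The basis change `e₀ ↦ e₀ + q e₂`.
theorem isCongruent_skew4_shear_two_zero (a b c d e f q : R) :
    IsCongruent (skew4 a b c d e f) (skew4 (a - q * d) b (c + q * f) d e f) := by
  refine ⟨!![1, 0, 0, 0; 0, 1, 0, 0; q, 0, 1, 0; 0, 0, 0, 1], ?_, ?_⟩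
  · simp [det_succ_row_zero, Fin.sum_univ_succ]
  · ext i j
    fin_cases i <;> fin_cases j <;> simp [skew4, mul_apply, Fin.sum_univ_succ] <;> ring

theorem exists_isCongruent_skew4_cleared {a b c d e : R} (f : R) (hb : a ∣ b) (hc : a ∣ c)
    (hd : a ∣ d) (he : a ∣ e) : ∃ f', IsCongruent (skew4 a b c d e f) (skew4 a 0 0 0 0 f') := by
  obtain ⟨β, rfl⟩ := hb
  obtain ⟨γ, rfl⟩ := hc
  obtain ⟨δ, rfl⟩ := hd
  obtain ⟨ε, rfl⟩ := he
  exact ⟨_, by convert isCongruent_skew4_shear a _ _ _ _ f δ ε (-β) (-γ) using 2 <;> ring⟩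

theorem det_skew4 (a b c d e f : R) :
    (skew4 a b c d e f).det = (a * f - b * e + c * d) ^ 2 := by
  simp [skew4, det_succ_row_zero, Fin.sum_univ_succ, Fin.succAbove]
  ring

end Skew4

section Int

variable {A : Matrix (Fin 4) (Fin 4) ℤ}

theorem eq_skew4_of_transpose_eq_neg (hA : Aᵀ = -A) :
    A = skew4 (A 0 1) (A 0 2) (A 0 3) (A 1 2) (A 1 3) (A 2 3) := by
  ext i j
  have hji : A j i = -A i j := congrFun (congrFun hA i) j
  fin_cases i <;> fin_cases j <;> simp [skew4] at hji ⊢ <;> omega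

theorem pfaffian4_skew4 (a b c d e f : ℤ) :
    pfaffian4 (skew4 a b c d e f) = a * f - b * e + c * d :=
  rfl

theorem det_eq_pfaffian4_sq (hA : Aᵀ = -A) : A.det = pfaffian4 A ^ 2 := by
  rw [eq_skew4_of_transpose_eq_neg hA, det_skew4, pfaffian4_skew4]

theorem Matrix.IsCongruent.eq_abs_pfaffian4 (hA : Aᵀ = -A) {m : ℤ} (hm : 0 ≤ m)
    (h : IsCongruent A (skew4 1 0 0 0 0 m)) : m = |pfaffian4 A| := by
  have hdet := h.det_eq
  rw [det_skew4, det_eq_pfaffian4_sq hA, ← sq_abs (pfaffian4 A)] at hdet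
  exact (pow_left_inj₀ hm (abs_nonneg _) two_ne_zero).1 (by simpa using hdet)

theorem exists_isCongruent_skew4_pivot_lt_of_not_dvd {a b : ℤ} (c d e f : ℤ) (ha : a ≠ 0)
    (hab : ¬a ∣ b) :
    ∃ B, IsCongruent (skew4 a b c d e f) B ∧ B 0 1 ≠ 0 ∧ (B 0 1).natAbs < a.natAbs := by
  have hr : b + -(b / a) * a = b % a := by rw [Int.emod_def]; ring
  refine ⟨_, (isCongruent_skew4_shear a b c d e f 0 0 (-(b / a)) 0).trans
    (isCongruent_skew4_swap12 ..), ?_, ?_⟩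
  · change b + -(b / a) * a ≠ 0
    exact hr ▸ fun h => hab (Int.dvd_of_emod_eq_zero h)
  · change (b + -(b / a) * a).natAbs < a.natAbs
    rw [hr, ← Int.natAbs_abs a]
    exact Int.natAbs_lt_natAbs_of_nonneg_of_lt (Int.emod_nonneg b ha) (Int.emod_lt_abs b ha)

theorem exists_isCongruent_skew4_pivot_lt {a b c d e f : ℤ}
    (hind : IsIndivisible (skew4 a b c d e f)) (ha : a ≠ 0) (hu : ¬IsUnit a) :
    ∃ B, IsCongruent (skew4 a b c d e f) B ∧ B 0 1 ≠ 0 ∧ (B 0 1).natAbs < a.natAbs := by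
  have via {X : Matrix (Fin 4) (Fin 4) ℤ} (hX : IsCongruent (skew4 a b c d e f) X)
      (h : ∃ B, IsCongruent X B ∧ B 0 1 ≠ 0 ∧ (B 0 1).natAbs < a.natAbs) :
      ∃ B, IsCongruent (skew4 a b c d e f) B ∧ B 0 1 ≠ 0 ∧ (B 0 1).natAbs < a.natAbs :=
    let ⟨B, hXB, hB⟩ := h; ⟨B, hX.trans hXB, hB⟩
  have hna : (-a).natAbs = a.natAbs := Int.natAbs_neg a
  have hna0 : -a ≠ 0 := neg_ne_zero.2 ha
  by_cases hb : a ∣ b; swap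
  · exact exists_isCongruent_skew4_pivot_lt_of_not_dvd c d e f ha hb
  by_cases hc : a ∣ c; swap
  · exact via (isCongruent_skew4_swap23 ..)
      (exists_isCongruent_skew4_pivot_lt_of_not_dvd _ _ _ _ ha hc)
  by_cases hd : a ∣ d; swap
  · exact via (isCongruent_skew4_swap01 ..)
      (hna ▸ exists_isCongruent_skew4_pivot_lt_of_not_dvd _ _ _ _ hna0 (by rwa [neg_dvd]))
  by_cases he : a ∣ e; swap
  · exact via ((isCongruent_skew4_swap01 ..).trans (isCongruent_skew4_swap23 ..))
      (hna ▸ exists_isCongruent_skew4_pivot_lt_of_not_dvd _ _ _ _ hna0 (by rwa [neg_dvd]))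
  obtain ⟨f', hf'⟩ := exists_isCongruent_skew4_cleared f hb hc hd he
  by_cases hf : a ∣ f'
  · refine absurd (hf'.isIndivisible hind a fun i j => ?_) hu
    fin_cases i <;> fin_cases j <;> simp [skew4, hf]
  · have hmix : IsCongruent (skew4 a 0 0 0 0 f') (skew4 a f' 0 0 0 (-f')) := by
      simpa using (isCongruent_skew4_shear_two_zero a 0 0 0 0 f' 1).trans
        (isCongruent_skew4_swap23 ..)
    exact via (hf'.trans hmix) (exists_isCongruent_skew4_pivot_lt_of_not_dvd _ _ _ _ ha hf)

theorem exists_isCongruent_pivot_lt (hA : Aᵀ = -A) (hind : IsIndivisible A)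
    (h01 : A 0 1 ≠ 0) (hu : ¬IsUnit (A 0 1)) :
    ∃ B, IsCongruent A B ∧ B 0 1 ≠ 0 ∧ (B 0 1).natAbs < (A 0 1).natAbs := by
  have h := exists_isCongruent_skew4_pivot_lt (eq_skew4_of_transpose_eq_neg hA ▸ hind) h01 hu
  rwa [← eq_skew4_of_transpose_eq_neg hA] at h

theorem exists_isCongruent_pivot_ne_zero (hA : Aᵀ = -A) (hind : IsIndivisible A) :
    ∃ B, IsCongruent A B ∧ B 0 1 ≠ 0 := by
  obtain ⟨i, j, hij⟩ := hind.exists_apply_ne_zero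
  have hne : i ≠ j := by
    rintro rfl
    have hii : A i i = -A i i := congrFun (congrFun hA i) i
    exact hij (by omega)
  obtain ⟨σ, hσ0, hσ1⟩ := Equiv.Perm.exists_apply_eq_apply_eq (zero_ne_one' (Fin 4)) hne
  exact ⟨_, IsCongruent.submatrix A σ, by simpa [hσ0, hσ1] using hij⟩

theorem exists_isCongruent_pivot_eq_one (hA : Aᵀ = -A) (hind : IsIndivisible A)
    (h01 : A 0 1 ≠ 0) : ∃ B, IsCongruent A B ∧ B 0 1 = 1 := by
  induction hn : (A 0 1).natAbs using Nat.strong_induction_on generalizing A with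
  | _ n ih =>
  by_cases hu : IsUnit (A 0 1)
  · rcases Int.isUnit_iff.1 hu with h | h
    · exact ⟨A, .refl A, h⟩
    · refine ⟨_, IsCongruent.submatrix A (Equiv.swap 0 1), ?_⟩
      have h10 : A 1 0 = -A 0 1 := congrFun (congrFun hA 0) 1
      simp [h10, h]
  · obtain ⟨B, hAB, hB0, hlt⟩ := exists_isCongruent_pivot_lt hA hind h01 hu
    obtain ⟨C, hBC, hC⟩ :=
      ih _ (hn ▸ hlt) (hAB.transpose_eq_neg hA) (hAB.isIndivisible hind) hB0 rfl
    exact ⟨C, hAB.trans hBC, hC⟩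

theorem exists_isCongruent_skew4_normal (hA : Aᵀ = -A) (hind : IsIndivisible A) :
    ∃ m, 0 ≤ m ∧ IsCongruent A (skew4 1 0 0 0 0 m) := by
  obtain ⟨B, hAB, hB0⟩ := exists_isCongruent_pivot_ne_zero hA hind
  have hB := hAB.transpose_eq_neg hA
  obtain ⟨C, hBC, hC1⟩ := exists_isCongruent_pivot_eq_one hB (hAB.isIndivisible hind) hB0
  have hAC := hAB.trans hBC
  rw [eq_skew4_of_transpose_eq_neg (hBC.transpose_eq_neg hB), hC1] at hAC
  obtain ⟨m, hm⟩ := exists_isCongruent_skew4_cleared (C 2 3) (one_dvd (C 0 2)) (one_dvd _)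
    (one_dvd _) (one_dvd _)
  rcases le_total 0 m with hm0 | hm0
  · exact ⟨m, hm0, hAC.trans hm⟩
  · exact ⟨-m, neg_nonneg.2 hm0, (hAC.trans hm).trans (isCongruent_skew4_swap23 ..)⟩

end Int

theorem rank_four_symplectic_lattices_isomorphic_general
    (A B : Matrix (Fin 4) (Fin 4) ℤ)
    (hA : Aᵀ = -A) (hB : Bᵀ = -B)
    (hAprim : ∀ d : ℤ, (∀ i j, d ∣ A i j) → IsUnit d)
    (hBprim : ∀ d : ℤ, (∀ i j, d ∣ B i j) → IsUnit d)
    (hPf : pfaffian4 A = pfaffian4 B) :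
    ∃ P : Matrix (Fin 4) (Fin 4) ℤ, IsUnit P.det ∧ Pᵀ * A * P = B := by
  obtain ⟨m, hm, hAm⟩ := exists_isCongruent_skew4_normal hA hAprim
  obtain ⟨m', hm', hBm⟩ := exists_isCongruent_skew4_normal hB hBprim
  have hmm' : m = m' := by
    rw [hAm.eq_abs_pfaffian4 hA hm, hBm.eq_abs_pfaffian4 hB hm', hPf]
  exact hAm.trans (hmm' ▸ hBm.symm)

/-- **Classification of rank-four integral symplectic lattices.**
Two indivisible integral alternating forms on `ℤ⁴` (skew-symmetric integer
Gram matrices with unit gcd of entries) with equal positive Pfaffians are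
isomorphic: there is `P ∈ GL(4,ℤ)` with `Pᵀ·A·P = B`. -/
theorem rank_four_symplectic_lattices_isomorphic
    (A B : Matrix (Fin 4) (Fin 4) ℤ)
    (hA : Aᵀ = -A) (hB : Bᵀ = -B)
    (hAprim : ∀ d : ℤ, (∀ i j, d ∣ A i j) → IsUnit d)
    (hBprim : ∀ d : ℤ, (∀ i j, d ∣ B i j) → IsUnit d)
    (hPf : pfaffian4 A = pfaffian4 B)
    (hpos : 0 < pfaffian4 A) :
    ∃ P : Matrix (Fin 4) (Fin 4) ℤ, IsUnit P.det ∧ Pᵀ * A * P = B :=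
  rank_four_symplectic_lattices_isomorphic_general A B hA hB hAprim hBprim hPf
end
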